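/- Assume moreover that 1 < β ≤ 2. Then for every n ≥ 1 one has κ(n) ≤ F(n+2), where F(n) is the n-th Fibonacci number (F(0) = 0, F(1) = 1, F(n) = F(n−1) + F(n−2)). -/

import Mathlib

open MeasureTheory Set

/-- The greedy β-transformation with deleted digit set `{0, a₁, a₂}`:
`T x = βx` on `Δ(0) = [0, a₁/β)`, `T x = βx − a₁` on `Δ(a₁) = [a₁/β, a₂/β)`,
and `T x = βx − a₂` on `Δ(a₂) = [a₂/β, a₁)`. -/
noncomputable def greedyT (β a₁ a₂ : ℝ) (x : ℝ) : ℝ :=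
  if x < a₁ / β then β * x
  else if x < a₂ / β then β * x - a₁
  else β * x - a₂

/-- The interval `Δ(b)` associated to a digit `b ∈ {0, a₁, a₂}`. -/
noncomputable def digitInt (β a₁ a₂ : ℝ) (b : ℝ) : Set ℝ :=
  if b = 0 then Set.Ico 0 (a₁ / β)
  else if b = a₁ then Set.Ico (a₁ / β) (a₂ / β)
  else Set.Ico (a₂ / β) a₁

/-- The fundamental interval `Δ(w) = ⋂_{k < n} T⁻ᵏ Δ(b_k)` of a word
`w = (b₀, …, b_{n−1})`. -/
noncomputable def cyl (β a₁ a₂ : ℝ) (w : List ℝ) : Set ℝ :=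
  ⋂ k ∈ Finset.range w.length,
    (greedyT β a₁ a₂)^[k] ⁻¹' digitInt β a₁ a₂ (w.getD k 0)

/-- `w` is a word over the alphabet `A = {0, a₁, a₂}`. -/
def isWord (a₁ a₂ : ℝ) (w : List ℝ) : Prop := ∀ b ∈ w, b = 0 ∨ b = a₁ ∨ b = a₂

/-- The fundamental interval `Δ(w)` is full: `λ(Δ(w)) = a₁/β^|w|`. -/
def isFull (β a₁ a₂ : ℝ) (w : List ℝ) : Prop :=
  volume (cyl β a₁ a₂ w) = ENNReal.ofReal (a₁ / β ^ w.length)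

/-- Condition (6): `a₁ · max (β−1) 1 < a₂ < a₁ · min 2 β`. -/
def condition6 (β a₁ a₂ : ℝ) : Prop :=
  a₁ * max (β - 1) 1 < a₂ ∧ a₂ < a₁ * min 2 β

/-- `w ∈ Bₙ`: `w` is a word of length `n` over `A` with `λ(Δ(w)) > 0`, `Δ(w)`
non-full, and `Δ(w′)` non-full for every nonempty proper prefix `w′` of `w`. -/
def memB (β a₁ a₂ : ℝ) (n : ℕ) (w : List ℝ) : Prop :=
  w.length = n ∧ isWord a₁ a₂ w ∧ 0 < volume (cyl β a₁ a₂ w) ∧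
    ¬ isFull β a₁ a₂ w ∧
    ∀ w' : List ℝ, w' ≠ [] → w' <+: w → w' ≠ w → ¬ isFull β a₁ a₂ w'

/-- `κ(n)`: the number of elements of `Bₙ`. -/
noncomputable def kappa (β a₁ a₂ : ℝ) (n : ℕ) : ℕ :=
  {w : List ℝ | memB β a₁ a₂ n w}.ncard

/-!
On `Δ(w) ∩ [0, a₁)` the iterate `T^|w|` is `x ↦ β^|w| x − v(w)`, with image `[0, τ(w))` where
`τ(wb) = min (βτ(w), β · sup Δ(b)) − b`. So for nonempty `w`, `Δ(wb)` is non-full of positive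
measure iff `0 < τ(wb) ≠ a₁`, which forces `βτ(w) < a₁` when `b = 0` and `b < βτ(w)` otherwise.
Hence a word of `Bₙ` has at most one child in `Bₙ₊₁` other than its `a₂`-child, and the `a₂`-child
exists only if `βτ(w) > a₂`; the `a₁`-child never has this property because `β(a₂ − a₁) ≤ a₂`
for `β ≤ 2`. Counting the words with `βτ(w) > a₂` by `κ'`, this gives `κ(n+1) ≤ κ(n) + κ'(n)` and
`κ'(n+1) ≤ κ(n)`, and the Fibonacci bound follows by induction from `B₀ = {[]}`.
-/

noncomputable def wordValue (β : ℝ) (w : List ℝ) : ℝ :=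
  w.foldl (fun v b => β * v + b) 0

noncomputable def digitEnd (β a₁ a₂ b : ℝ) : ℝ :=
  if b = 0 then a₁ / β else if b = a₁ then a₂ / β else a₁

/-- `T^|w|` maps `Δ(w) ∩ [0, a₁)` affinely onto `[0, tailLength w)`. -/
noncomputable def tailLength (β a₁ a₂ : ℝ) (w : List ℝ) : ℝ :=
  w.foldl (fun t b => min (β * t) (β * digitEnd β a₁ a₂ b) - b) a₁

@[simp] lemma wordValue_append_singleton (β : ℝ) (w : List ℝ) (b : ℝ) :
    wordValue β (w ++ [b]) = β * wordValue β w + b := by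
  simp [wordValue]

@[simp] lemma tailLength_append_singleton (β a₁ a₂ : ℝ) (w : List ℝ) (b : ℝ) :
    tailLength β a₁ a₂ (w ++ [b]) =
      min (β * tailLength β a₁ a₂ w) (β * digitEnd β a₁ a₂ b) - b := by
  simp [tailLength]

lemma cyl_append_singleton (β a₁ a₂ : ℝ) (w : List ℝ) (b : ℝ) :
    cyl β a₁ a₂ (w ++ [b]) =
      cyl β a₁ a₂ w ∩ (greedyT β a₁ a₂)^[w.length] ⁻¹' digitInt β a₁ a₂ b := by
  unfold cyl
  rw [List.length_append, List.length_singleton, Finset.range_add_one,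
    Finset.set_biInter_insert, inter_comm]
  congr 1
  · refine iInter₂_congr fun k hk => ?_
    rw [List.getD_append _ _ _ _ (Finset.mem_range.mp hk)]
  · simp

lemma isWord_append_singleton {a₁ a₂ : ℝ} {w : List ℝ} {b : ℝ} :
    isWord a₁ a₂ (w ++ [b]) ↔ isWord a₁ a₂ w ∧ (b = 0 ∨ b = a₁ ∨ b = a₂) := by
  simp [isWord, or_imp, forall_and]

lemma words_finite (a₁ a₂ : ℝ) (n : ℕ) :
    {w : List ℝ | w.length = n ∧ isWord a₁ a₂ w}.Finite := by
  refine ((List.finite_length_eq ({0, a₁, a₂} : Set ℝ) n).image (List.map (↑))).subset ?_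
  rintro w ⟨hlen, hw⟩
  lift w to List ({0, a₁, a₂} : Set ℝ) using hw
  exact ⟨w, by simpa using hlen, rfl⟩

variable {β a₁ a₂ : ℝ}

lemma digitInt_eq_Ico (ha₁ : 0 < a₁) (h12 : a₁ < a₂) {b : ℝ} (hb : b = 0 ∨ b = a₁ ∨ b = a₂) :
    digitInt β a₁ a₂ b = Ico (b / β) (digitEnd β a₁ a₂ b) := by
  rcases hb with rfl | rfl | rfl <;>
    simp [digitInt, digitEnd, ha₁.ne', (ha₁.trans h12).ne', h12.ne']

lemma greedyT_of_mem_digitInt (hβ : 0 < β) (ha₁ : 0 < a₁) (h12 : a₁ < a₂) {b x : ℝ}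
    (hb : b = 0 ∨ b = a₁ ∨ b = a₂) (hx : x ∈ digitInt β a₁ a₂ b) :
    greedyT β a₁ a₂ x = β * x - b := by
  rw [digitInt_eq_Ico ha₁ h12 hb] at hx
  have : a₁ / β < a₂ / β := by gcongr
  rcases hb with rfl | rfl | rfl
  · simp [digitEnd] at hx
    simp [greedyT, hx.2]
  · simp [digitEnd, ha₁.ne'] at hx
    simp [greedyT, not_lt.2 hx.1, hx.2]
  · simp [digitEnd, (ha₁.trans h12).ne', h12.ne'] at hx
    simp [greedyT, not_lt.2 (this.le.trans hx.1), not_lt.2 hx.1]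

lemma iterate_greedyT_of_mem_cyl (hβ : 0 < β) (ha₁ : 0 < a₁) (h12 : a₁ < a₂) {w : List ℝ}
    (hw : isWord a₁ a₂ w) {x : ℝ} (hx : x ∈ cyl β a₁ a₂ w) :
    (greedyT β a₁ a₂)^[w.length] x = β ^ w.length * x - wordValue β w := by
  induction w using List.reverseRecOn with
  | nil => simp [wordValue]
  | append_singleton w b ih =>
    rw [isWord_append_singleton] at hw
    rw [cyl_append_singleton] at hx
    rw [List.length_append, List.length_singleton, Function.iterate_succ_apply',
      greedyT_of_mem_digitInt hβ ha₁ h12 hw.2 hx.2, ih hw.1 hx.1, wordValue_append_singleton]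
    ring

lemma mem_Ico_and_mem_Ico_iff (hβ : 0 < β) {b : ℝ} (hb : 0 ≤ b) (y t e : ℝ) :
    y ∈ Ico 0 t ∧ y ∈ Ico (b / β) e ↔ β * y - b ∈ Ico 0 (min (β * t) (β * e) - b) := by
  simp only [mem_Ico, lt_min_iff, sub_nonneg, sub_lt_sub_iff_right, mul_lt_mul_iff_right₀ hβ,
    div_le_iff₀ hβ, mul_comm y]
  constructor
  · rintro ⟨⟨-, h1⟩, h2, h3⟩
    exact ⟨h2, h1, h3⟩
  · rintro ⟨h2, h1, h3⟩
    exact ⟨⟨by nlinarith, h1⟩, h2, h3⟩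

lemma cyl_inter_Ico_eq_preimage (hβ : 0 < β) (ha₁ : 0 < a₁) (h12 : a₁ < a₂) {w : List ℝ}
    (hw : isWord a₁ a₂ w) :
    cyl β a₁ a₂ w ∩ Ico 0 a₁ =
      (fun x => β ^ w.length * x - wordValue β w) ⁻¹' Ico 0 (tailLength β a₁ a₂ w) := by
  induction w using List.reverseRecOn with
  | nil => ext; simp [cyl, wordValue, tailLength]
  | append_singleton w b ih =>
    rw [isWord_append_singleton] at hw
    have hb : 0 ≤ b := by rcases hw.2 with rfl | rfl | rfl <;> linarith
    ext x
    have hx := congrArg (x ∈ ·) (ih hw.1)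
    simp only [mem_inter_iff, mem_preimage, eq_iff_iff] at hx
    rw [cyl_append_singleton, mem_inter_iff, mem_inter_iff, mem_preimage, mem_preimage,
      tailLength_append_singleton, wordValue_append_singleton, List.length_append,
      List.length_singleton, pow_succ, digitInt_eq_Ico ha₁ h12 hw.2]
    rw [show β ^ w.length * β * x - (β * wordValue β w + b) =
        β * (β ^ w.length * x - wordValue β w) - b by ring,
      ← mem_Ico_and_mem_Ico_iff hβ hb, ← hx]
    constructor
    · rintro ⟨⟨hc, hT⟩, hI⟩
      rw [iterate_greedyT_of_mem_cyl hβ ha₁ h12 hw.1 hc] at hT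
      exact ⟨⟨hc, hI⟩, hT⟩
    · rintro ⟨⟨hc, hI⟩, hT⟩
      rw [← iterate_greedyT_of_mem_cyl hβ ha₁ h12 hw.1 hc] at hT
      exact ⟨⟨hc, hT⟩, hI⟩

lemma preimage_affine_Ico {c : ℝ} (hc : 0 < c) (v t : ℝ) :
    (fun x => c * x - v) ⁻¹' Ico 0 t = Ico (v / c) ((v + t) / c) := by
  ext x
  simp only [mem_preimage, mem_Ico, sub_nonneg, div_le_iff₀ hc, lt_div_iff₀ hc]
  constructor <;> rintro ⟨h₁, h₂⟩ <;> constructor <;> linarith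

lemma digitInt_subset_Ico (hβ : 0 < β) (ha₁ : 0 < a₁) (h12 : a₁ < a₂) (h2β : a₂ ≤ β * a₁)
    (b : ℝ) : digitInt β a₁ a₂ b ⊆ Ico 0 a₁ := by
  have h₁ : a₁ / β ≤ a₂ / β := by gcongr
  have h₂ : a₂ / β ≤ a₁ := by rwa [div_le_iff₀' hβ]
  unfold digitInt
  split_ifs
  · exact Ico_subset_Ico le_rfl (h₁.trans h₂)
  · exact Ico_subset_Ico (div_nonneg ha₁.le hβ.le) h₂
  · exact Ico_subset_Ico (div_nonneg (ha₁.trans h12).le hβ.le) le_rfl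

lemma cyl_subset_Ico (hβ : 0 < β) (ha₁ : 0 < a₁) (h12 : a₁ < a₂) (h2β : a₂ ≤ β * a₁)
    {w : List ℝ} (hne : w ≠ []) : cyl β a₁ a₂ w ⊆ Ico 0 a₁ := fun _ hx =>
  digitInt_subset_Ico hβ ha₁ h12 h2β _
    (mem_iInter₂.1 hx 0 (Finset.mem_range.2 (List.length_pos_iff.2 hne)))

lemma volume_cyl (hβ : 0 < β) (ha₁ : 0 < a₁) (h12 : a₁ < a₂) (h2β : a₂ ≤ β * a₁)
    {w : List ℝ} (hw : isWord a₁ a₂ w) (hne : w ≠ []) :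
    volume (cyl β a₁ a₂ w) = ENNReal.ofReal (tailLength β a₁ a₂ w / β ^ w.length) := by
  rw [← inter_eq_left.2 (cyl_subset_Ico hβ ha₁ h12 h2β hne),
    cyl_inter_Ico_eq_preimage hβ ha₁ h12 hw, preimage_affine_Ico (by positivity),
    Real.volume_Ico]
  ring_nf

lemma memB_of_memB_append_singleton {n : ℕ} {w : List ℝ} {b : ℝ}
    (h : memB β a₁ a₂ (n + 1) (w ++ [b])) : memB β a₁ a₂ n w := by
  obtain ⟨hlen, hw, hpos, -, hpre⟩ := h
  have hlt : w.length < (w ++ [b]).length := by simp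
  refine ⟨by simpa using hlen, (isWord_append_singleton.1 hw).1, ?_, ?_, ?_⟩
  · exact hpos.trans_le (measure_mono (by rw [cyl_append_singleton]; exact inter_subset_left))
  · rcases eq_or_ne w [] with rfl | hne
    · simp [isFull, cyl]
    · exact hpre w hne (List.prefix_append _ _) (ne_of_apply_ne List.length hlt.ne)
  · intro w' hne hpw _
    exact hpre w' hne (hpw.trans (List.prefix_append _ _))
      (ne_of_apply_ne List.length (hpw.length_le.trans_lt hlt).ne)

lemma exists_eq_append_singleton_of_memB {n : ℕ} {u : List ℝ}
    (h : memB β a₁ a₂ (n + 1) u) : ∃ w b, u = w ++ [b] := by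
  rcases List.eq_nil_or_concat u with rfl | ⟨w, b, rfl⟩
  · simp [memB] at h
  · exact ⟨w, b, List.concat_eq_append⟩

lemma dropLast_mem_setOf_memB {n : ℕ} {u : List ℝ}
    (h : memB β a₁ a₂ (n + 1) u) : u.dropLast ∈ {w | memB β a₁ a₂ n w} := by
  obtain ⟨w, b, rfl⟩ := exists_eq_append_singleton_of_memB h
  simpa using memB_of_memB_append_singleton h

lemma memB_finite (β a₁ a₂ : ℝ) (n : ℕ) : {w : List ℝ | memB β a₁ a₂ n w}.Finite :=
  (words_finite a₁ a₂ n).subset fun _ hw => ⟨hw.1, hw.2.1⟩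

/-- `T^|w| Δ(w) = [0, tailLength w)` meets `Δ(a₂) = [a₂/β, a₁)`. -/
def reachesTopDigit (β a₁ a₂ : ℝ) (w : List ℝ) : Prop :=
  a₂ < β * tailLength β a₁ a₂ w

lemma not_reachesTopDigit_append_a₁ (hβ : 0 < β) (ha₁ : 0 < a₁)
    (hgap : β * (a₂ - a₁) ≤ a₂) (w : List ℝ) : ¬ reachesTopDigit β a₁ a₂ (w ++ [a₁]) := by
  have hend : β * digitEnd β a₁ a₂ a₁ = a₂ := by
    simp [digitEnd, ha₁.ne', mul_div_cancel₀ _ hβ.ne']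
  rw [reachesTopDigit, tailLength_append_singleton, hend, not_lt]
  calc β * (min (β * tailLength β a₁ a₂ w) a₂ - a₁) ≤ β * (a₂ - a₁) := by
        gcongr; exact min_le_right _ _
    _ ≤ a₂ := hgap

noncomputable def kappaTop (β a₁ a₂ : ℝ) (n : ℕ) : ℕ :=
  {w : List ℝ | memB β a₁ a₂ n w ∧ reachesTopDigit β a₁ a₂ w}.ncard

lemma kappa_zero_le_one (β a₁ a₂ : ℝ) : kappa β a₁ a₂ 0 ≤ 1 := by
  have : {w : List ℝ | memB β a₁ a₂ 0 w} ⊆ {[]} := fun w hw =>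
    List.length_eq_zero_iff.1 hw.1
  simpa [kappa] using Set.ncard_le_ncard this

lemma kappaTop_le_kappa (β a₁ a₂ : ℝ) (n : ℕ) : kappaTop β a₁ a₂ n ≤ kappa β a₁ a₂ n :=
  Set.ncard_le_ncard (fun _ hw => hw.1) (memB_finite β a₁ a₂ n)

section

variable (hβ : 0 < β) (ha₁ : 0 < a₁) (h12 : a₁ < a₂) (h2β : a₂ ≤ β * a₁)
include hβ ha₁ h12 h2β

lemma tailLength_pos_and_ne_of_memB {n : ℕ} {u : List ℝ} (h : memB β a₁ a₂ (n + 1) u) :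
    0 < tailLength β a₁ a₂ u ∧ tailLength β a₁ a₂ u ≠ a₁ := by
  obtain ⟨hlen, hw, hpos, hfull, -⟩ := h
  have hne : u ≠ [] := by rintro rfl; simp at hlen
  rw [isFull, volume_cyl hβ ha₁ h12 h2β hw hne] at hfull
  rw [volume_cyl hβ ha₁ h12 h2β hw hne, ENNReal.ofReal_pos,
    div_pos_iff_of_pos_right (pow_pos hβ _)] at hpos
  exact ⟨hpos, fun h => hfull (by rw [h])⟩

lemma lt_mul_tailLength_of_memB_append {n : ℕ} {w : List ℝ} {b : ℝ}
    (h : memB β a₁ a₂ (n + 1) (w ++ [b])) : b < β * tailLength β a₁ a₂ w := by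
  have := (tailLength_pos_and_ne_of_memB hβ ha₁ h12 h2β h).1
  rw [tailLength_append_singleton, sub_pos] at this
  exact this.trans_le (min_le_left _ _)

lemma mul_tailLength_lt_of_memB_append_zero {n : ℕ} {w : List ℝ}
    (h : memB β a₁ a₂ (n + 1) (w ++ [0])) : β * tailLength β a₁ a₂ w < a₁ := by
  have := (tailLength_pos_and_ne_of_memB hβ ha₁ h12 h2β h).2
  rw [tailLength_append_singleton, sub_zero] at this
  simp only [digitEnd, if_true, mul_div_cancel₀ _ hβ.ne'] at this
  by_contra! hle
  exact this (min_eq_right hle)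

lemma eq_zero_of_memB_append_zero {n : ℕ} {w : List ℝ} {c : ℝ}
    (h₀ : memB β a₁ a₂ (n + 1) (w ++ [0])) (hc : memB β a₁ a₂ (n + 1) (w ++ [c])) : c = 0 := by
  have h₁ := mul_tailLength_lt_of_memB_append_zero hβ ha₁ h12 h2β h₀
  have h₂ := lt_mul_tailLength_of_memB_append hβ ha₁ h12 h2β hc
  rcases (isWord_append_singleton.1 hc.2.1).2 with rfl | rfl | rfl
  · rfl
  · exact absurd h₁ (by linarith)
  · exact absurd h₁ (by linarith)

lemma injOn_dropLast {n : ℕ} {d : ℝ} (hd : d = a₁ ∨ d = a₂) :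
    InjOn List.dropLast {u | memB β a₁ a₂ (n + 1) u ∧ u.getLast? ≠ some d} := by
  rintro u ⟨hu, hud⟩ v ⟨hv, hvd⟩ huv
  obtain ⟨w, b, rfl⟩ := exists_eq_append_singleton_of_memB hu
  obtain ⟨w', c, rfl⟩ := exists_eq_append_singleton_of_memB hv
  simp only [List.dropLast_concat] at huv
  subst huv
  simp only [List.getLast?_concat, ne_eq, Option.some.injEq] at hud hvd
  have hb := (isWord_append_singleton.1 hu.2.1).2
  have hc := (isWord_append_singleton.1 hv.2.1).2
  suffices b = c by rw [this]
  by_cases hb0 : b = 0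
  · subst hb0; exact (eq_zero_of_memB_append_zero hβ ha₁ h12 h2β hu hv).symm
  by_cases hc0 : c = 0
  · subst hc0; exact eq_zero_of_memB_append_zero hβ ha₁ h12 h2β hv hu
  rcases hd with rfl | rfl <;> grind

lemma kappa_succ_le (n : ℕ) :
    kappa β a₁ a₂ (n + 1) ≤ kappa β a₁ a₂ n + kappaTop β a₁ a₂ n := by
  rw [kappa, ← ncard_inter_add_ncard_sdiff_eq_ncard _ {u : List ℝ | u.getLast? = some a₂}
    (memB_finite β a₁ a₂ (n + 1)), add_comm]
  apply add_le_add
  · exact ncard_le_ncard_of_injOn List.dropLast (fun _ hu => dropLast_mem_setOf_memB hu.1)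
      ((injOn_dropLast hβ ha₁ h12 h2β (Or.inr rfl)).mono fun _ hu => hu) (memB_finite β a₁ a₂ n)
  · refine ncard_le_ncard_of_injOn List.dropLast ?_ ?_
      ((memB_finite β a₁ a₂ n).subset fun _ hw => hw.1)
    · rintro u ⟨hu, hlast⟩
      obtain ⟨w, b, rfl⟩ := exists_eq_append_singleton_of_memB hu
      obtain rfl : b = a₂ := by simpa using hlast
      simpa using ⟨memB_of_memB_append_singleton hu,
        lt_mul_tailLength_of_memB_append hβ ha₁ h12 h2β hu⟩
    · rintro u ⟨-, hu⟩ v ⟨-, hv⟩ huv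
      calc u = u.dropLast ++ [a₂] := (List.dropLast_append_getLast? _ hu).symm
        _ = v := by rw [huv, List.dropLast_append_getLast? _ hv]

lemma kappaTop_succ_le (hgap : β * (a₂ - a₁) ≤ a₂) (n : ℕ) :
    kappaTop β a₁ a₂ (n + 1) ≤ kappa β a₁ a₂ n := by
  unfold kappaTop kappa
  refine ncard_le_ncard_of_injOn List.dropLast (fun _ hu => dropLast_mem_setOf_memB hu.1)
    ((injOn_dropLast (n := n) hβ ha₁ h12 h2β (Or.inl rfl)).mono ?_) (memB_finite β a₁ a₂ n)
  rintro u ⟨hu, htop⟩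
  refine ⟨hu, ?_⟩
  obtain ⟨w, b, rfl⟩ := exists_eq_append_singleton_of_memB hu
  rw [List.getLast?_concat, ne_eq, Option.some.injEq]
  rintro rfl
  exact not_reachesTopDigit_append_a₁ hβ ha₁ hgap w htop

lemma kappa_le_fib_and_kappaTop_le_fib (hgap : β * (a₂ - a₁) ≤ a₂) (n : ℕ) :
    kappa β a₁ a₂ n ≤ Nat.fib (n + 2) ∧ kappaTop β a₁ a₂ n ≤ Nat.fib (n + 1) := by
  induction n with
  | zero => exact ⟨kappa_zero_le_one β a₁ a₂, (kappaTop_le_kappa β a₁ a₂ 0).trans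
      (kappa_zero_le_one β a₁ a₂)⟩
  | succ n ih =>
    refine ⟨?_, (kappaTop_succ_le hβ ha₁ h12 h2β hgap n).trans ih.1⟩
    rw [Nat.fib_add_two]
    linarith [kappa_succ_le hβ ha₁ h12 h2β n, ih.1, ih.2]

end

theorem stmt6_general (β a₁ a₂ : ℝ) (hβ1 : 1 < β) (hβ2 : β ≤ 2)
    (ha₁ : 0 < a₁) (h12 : a₁ < a₂) (hc : condition6 β a₁ a₂) :
    ∀ n : ℕ, 1 ≤ n → kappa β a₁ a₂ n ≤ Nat.fib (n + 2) := by
  have h2β : a₂ ≤ β * a₁ := by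
    have := hc.2
    rw [min_eq_right hβ2, mul_comm] at this
    exact this.le
  have hgap : β * (a₂ - a₁) ≤ a₂ := by nlinarith
  exact fun n _ => (kappa_le_fib_and_kappaTop_le_fib (zero_lt_one.trans hβ1) ha₁ h12 h2β hgap n).1

/-- If moreover `1 < β ≤ 2`, then for every `n ≥ 1` one has
`κ(n) ≤ F(n+2)`, where `F` is the Fibonacci sequence. -/
theorem stmt6 (β a₁ a₂ : ℝ) (hβ1 : 1 < β) (hβ3 : β < 3) (hβ2 : β ≤ 2)
    (ha₁ : 0 < a₁) (h12 : a₁ < a₂) (hc : condition6 β a₁ a₂) :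
    ∀ n : ℕ, 1 ≤ n → kappa β a₁ a₂ n ≤ Nat.fib (n + 2) :=
  stmt6_general β a₁ a₂ hβ1 hβ2 ha₁ h12 hc
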